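/- Consider the system whose behavior is B = {y : ℤ≥0 → ℝ^N : there exists ℓ : ℤ≥0 → ℝ^m with y = M(σ)ℓ and D(σ)ℓ = 0}, where M(ξ) is an N × m polynomial matrix and D(ξ) is an m × m polynomial matrix over ℝ[ξ], the stacked (N+m) × m matrix [M(ξ); D(ξ)] is left unimodular, and B is nonzero. Then the security index satisfies δ(Σ) = N + 1 − L̃, where δ(Σ) := min{‖y‖ : 0 ≠ y ∈ B} and L̃ is the smallest integer such that for every subset J ⊆ {1,…,N} of cardinality L̃, the (L̃+m) × m matrix [M_J(ξ); D(ξ)] is left unimodular. -/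
import Mathlib


open Polynomial

/-- A signal with components indexed by `β`. -/
abbrev Signal (N : ℕ) := ℕ → Fin N → ℝ

/-- Action of a scalar polynomial on a scalar signal via the shift operator `σ`. -/
noncomputable def polyShift (a : Polynomial ℝ) (y : ℕ → ℝ) : ℕ → ℝ :=
  fun t => a.sum fun k c => c * y (t + k)

/-- Action of a polynomial matrix on a signal via the shift operator `σ`. -/
noncomputable def matShift {α β : Type*} [Fintype β]
    (P : Matrix α β (Polynomial ℝ)) (y : ℕ → β → ℝ) : ℕ → α → ℝ :=
  fun t i => ∑ j, polyShift (P i j) (fun s => y s j) t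

/-- Support of a signal: indices of components not identically zero. -/
def sigSupp {N : ℕ} (y : Signal N) : Set (Fin N) := {i | ¬ ∀ t, y t i = 0}

/-- Weight of a signal. -/
noncomputable def wt {N : ℕ} (y : Signal N) : ℕ := (sigSupp y).ncard

/-- A polynomial matrix is left unimodular if it has a polynomial left inverse. -/
def LeftUnimodular {α β : Type*} [Fintype α] [Fintype β] [DecidableEq β]
    (P : Matrix α β (Polynomial ℝ)) : Prop :=
  ∃ G : Matrix β α (Polynomial ℝ), G * P = 1

/-- Submatrix of the columns of `R` indexed by `J`. -/
def colSub {N : ℕ} (R : Matrix (Fin N) (Fin N) (Polynomial ℝ)) (J : Finset (Fin N)) :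
    Matrix (Fin N) {x // x ∈ J} (Polynomial ℝ) :=
  R.submatrix id (fun j => (j : Fin N))

/-- Submatrix of the rows of `M` indexed by `J`. -/
def rowSub {N m : ℕ} (M : Matrix (Fin N) (Fin m) (Polynomial ℝ)) (J : Finset (Fin N)) :
    Matrix {x // x ∈ J} (Fin m) (Polynomial ℝ) :=
  M.submatrix (fun i => (i : Fin N)) id

/-- Restriction of a signal to the components indexed by `J`. -/
def sigRestrict {N : ℕ} (r : Signal N) (J : Finset (Fin N)) : ℕ → {x // x ∈ J} → ℝ :=
  fun t i => r t (i : Fin N)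

/-- Security index: the minimum weight of a nonzero signal in the behavior. -/
noncomputable def secIdx {N : ℕ} (B : Set (Signal N)) : ℕ :=
  sInf {k | ∃ y ∈ B, y ≠ 0 ∧ wt y = k}

/-! ### Auxiliary lemmas -/

/-- The shift operator `σ` as a linear endomorphism of scalar signals. -/
noncomputable def shiftL : (ℕ → ℝ) →ₗ[ℝ] (ℕ → ℝ) where
  toFun y := fun t => y (t + 1)
  map_add' _ _ := rfl
  map_smul' _ _ := rfl

lemma shiftL_pow (k : ℕ) (y : ℕ → ℝ) (t : ℕ) : (shiftL ^ k) y t = y (t + k) := by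
  induction k generalizing y t with
  | zero => rfl
  | succ n ih =>
    rw [pow_succ]
    show (shiftL ^ n) (shiftL y) t = _
    rw [ih]
    show y (t + n + 1) = _
    ring_nf

lemma polyShift_eq_aeval (a : Polynomial ℝ) (y : ℕ → ℝ) :
    polyShift a y = (aeval shiftL a : (ℕ → ℝ) →ₗ[ℝ] (ℕ → ℝ)) y := by
  induction a using Polynomial.induction_on' with
  | add p q hp hq =>
    funext t
    have h1 : polyShift (p + q) y t = polyShift p y t + polyShift q y t := by
      unfold polyShift
      rw [Polynomial.sum_add_index] <;> simp [add_mul]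
    rw [h1, hp, hq, map_add]
    rfl
  | monomial n c =>
    funext t
    unfold polyShift
    rw [Polynomial.sum_monomial_index]
    · rw [Polynomial.aeval_monomial]
      show c * y (t + n) = ((algebraMap ℝ _ c) * shiftL ^ n) y t
      have : ((algebraMap ℝ ((ℕ → ℝ) →ₗ[ℝ] (ℕ → ℝ)) c) * shiftL ^ n) y t
          = c • ((shiftL ^ n) y t) := by
        have h2 : ((algebraMap ℝ ((ℕ → ℝ) →ₗ[ℝ] (ℕ → ℝ)) c) * shiftL ^ n) y
            = (algebraMap ℝ ((ℕ → ℝ) →ₗ[ℝ] (ℕ → ℝ)) c) ((shiftL ^ n) y) := rfl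
        rw [h2, Module.algebraMap_end_apply]
        rfl
      rw [this, shiftL_pow]
      simp
    · simp

lemma matShift_mul {α β γ : Type*} [Fintype β] [Fintype γ]
    (G : Matrix α β (Polynomial ℝ)) (P : Matrix β γ (Polynomial ℝ)) (y : ℕ → γ → ℝ) :
    matShift (G * P) y = matShift G (matShift P y) := by
  funext t i
  unfold matShift
  simp only [polyShift_eq_aeval]
  have key : ∀ k : β, (aeval shiftL (G i k) : (ℕ → ℝ) →ₗ[ℝ] (ℕ → ℝ))
      (fun s => ∑ j, (aeval shiftL (P k j) : (ℕ → ℝ) →ₗ[ℝ] (ℕ → ℝ)) (fun u => y u j) s) t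
      = ∑ j : γ, (aeval shiftL ((G i k) * (P k j)) : (ℕ → ℝ) →ₗ[ℝ] (ℕ → ℝ)) (fun u => y u j) t := by
    intro k
    have h1 : (fun s => ∑ j, (aeval shiftL (P k j) : (ℕ → ℝ) →ₗ[ℝ] (ℕ → ℝ)) (fun u => y u j) s)
        = ∑ j : γ, (aeval shiftL (P k j) : (ℕ → ℝ) →ₗ[ℝ] (ℕ → ℝ)) (fun u => y u j) := by
      funext s; rw [Finset.sum_apply]
    rw [h1, map_sum, Finset.sum_apply]
    congr 1
    funext j
    rw [map_mul]
    rfl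
  rw [Finset.sum_congr rfl (fun k _ => key k)]
  rw [Finset.sum_comm]
  congr 1
  funext j
  have : (G * P) i j = ∑ k, G i k * P k j := rfl
  rw [this, map_sum, LinearMap.sum_apply, Finset.sum_apply]

lemma matShift_one {β : Type*} [Fintype β] [DecidableEq β] (y : ℕ → β → ℝ) :
    matShift (1 : Matrix β β (Polynomial ℝ)) y = y := by
  funext t i
  unfold matShift
  rw [Finset.sum_eq_single i]
  · rw [Matrix.one_apply_eq, polyShift_eq_aeval, map_one]
    rfl
  · intro b _ hb
    have : (1 : Matrix β β (Polynomial ℝ)) i b = 0 := Matrix.one_apply_ne (Ne.symm hb)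
    simp [this, polyShift]
  · simp

lemma matShift_zero_sig {α β : Type*} [Fintype β] (P : Matrix α β (Polynomial ℝ)) :
    matShift P (0 : ℕ → β → ℝ) = 0 := by
  funext t i
  simp [matShift, polyShift, Polynomial.sum]

lemma LeftUnimodular.ker_zero {α β : Type*} [Fintype α] [Fintype β] [DecidableEq β]
    {P : Matrix α β (Polynomial ℝ)} (h : LeftUnimodular P) {ℓ : ℕ → β → ℝ}
    (hl : matShift P ℓ = 0) : ℓ = 0 := by
  obtain ⟨G, hG⟩ := h
  have := matShift_mul G P ℓ
  rw [hG, matShift_one, hl, matShift_zero_sig] at this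
  exact this

lemma torsion_irred {Mo : Type*} [AddCommGroup Mo] [Module (Polynomial ℝ) Mo] :
    ∀ p : Polynomial ℝ, p ≠ 0 → ∀ c : Mo, c ≠ 0 → p • c = 0 →
      ∃ q : Polynomial ℝ, Irreducible q ∧ ∃ d : Mo, d ≠ 0 ∧ q • d = 0 := by
  intro p
  refine UniqueFactorizationMonoid.induction_on_prime p (fun h => absurd rfl h) ?_ ?_
  · intro x hx _ c hc hxc
    refine absurd ?_ hc
    obtain ⟨u, rfl⟩ := hx
    have := congrArg (fun z => (↑u⁻¹ : Polynomial ℝ) • z) hxc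
    simpa [smul_smul] using this
  · intro a q ha hq ih hqa c hc hqac
    by_cases hac : a • c = 0
    · exact ih ha c hc hac
    · exact ⟨q, hq.irreducible, a • c, hac, by rw [smul_smul]; exact hqac⟩

/-- A polynomial matrix that is not left unimodular has a complex "evaluation kernel":
some point `z` and nonzero vector `w` with `P(z) w = 0`. -/
lemma exists_complex_ker {α : Type*} [Fintype α] [DecidableEq α] {m : ℕ}
    (P : Matrix α (Fin m) (Polynomial ℝ)) (h : ¬ LeftUnimodular P) :
    ∃ (z : ℂ) (w : Fin m → ℂ), w ≠ 0 ∧ ∀ i, ∑ j, (aeval z (P i j)) * w j = 0 := by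
  classical
  let R := Polynomial ℝ
  set φ : (Fin m → R) →ₗ[R] (α → R) := Matrix.toLin' P with hφ
  have hmv : ∀ (v : Fin m → R) (i : α), φ v i = ∑ j, P i j * v j := by
    intro v i
    rw [hφ, Matrix.toLin'_apply]
    simp [Matrix.mulVec, dotProduct]
  by_cases hinj : Function.Injective φ
  · -- injective case: cokernel torsion or free
    set Q : Submodule R (α → R) := LinearMap.range φ with hQ
    set C := (α → R) ⧸ Q
    by_cases htf : ∀ (p : R) (c : C), p • c = 0 → p = 0 ∨ c = 0
    · -- torsion free: contradiction with non-left-unimodularity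
      exfalso
      haveI : NoZeroSMulDivisors R C := ⟨fun hpc => htf _ _ hpc⟩
      obtain ⟨s, hs⟩ := Module.projective_lifting_property Q.mkQ
        (LinearMap.id : C →ₗ[R] C) (Submodule.mkQ_surjective Q)
      set π : (α → R) →ₗ[R] (α → R) := LinearMap.id - s ∘ₗ Q.mkQ with hπ
      have hπmem : ∀ x, π x ∈ Q := by
        intro x
        have h0 : Q.mkQ (π x) = 0 := by
          have := congrFun (congrArg (fun f => f.toFun) hs) (Q.mkQ x)
          simp only [hπ, map_sub, LinearMap.sub_apply, LinearMap.comp_apply,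
            LinearMap.id_apply] at *
          rw [show Q.mkQ (s (Q.mkQ x)) = Q.mkQ x from this, sub_self]
        rwa [Submodule.mkQ_apply, Submodule.Quotient.mk_eq_zero] at h0
      set e := LinearEquiv.ofInjective φ hinj
      set g : (α → R) →ₗ[R] (Fin m → R) :=
        (e.symm : Q →ₗ[R] (Fin m → R)) ∘ₗ (π.codRestrict Q hπmem) with hg
      have hgφ : g ∘ₗ φ = LinearMap.id := by
        refine LinearMap.ext fun u => ?_
        have hπφ : π (φ u) = φ u := by
          have h0 : Q.mkQ (φ u) = 0 := by
            rw [Submodule.mkQ_apply, Submodule.Quotient.mk_eq_zero]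
            exact LinearMap.mem_range_self φ u
          simp [hπ, h0]
        have : (π.codRestrict Q hπmem) (φ u) = e u := by
          apply Subtype.ext
          rw [LinearMap.codRestrict_apply, hπφ]
          exact (LinearEquiv.ofInjective_apply φ u).symm
        simp only [hg, LinearMap.comp_apply, LinearMap.id_apply, this]
        exact e.symm_apply_apply u
      refine h ⟨LinearMap.toMatrix' g, ?_⟩
      have := congrArg LinearMap.toMatrix' hgφ
      rwa [LinearMap.toMatrix'_comp, hφ, LinearMap.toMatrix'_toLin',
        LinearMap.toMatrix'_id] at this
    · -- torsion case
      push_neg at htf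
      obtain ⟨p, c, hpc, hp0, hc0⟩ := htf
      obtain ⟨q, hqirr, d, hd0, hqd⟩ := torsion_irred p hp0 c hc0 hpc
      obtain ⟨y, hy⟩ := Submodule.mkQ_surjective Q d
      have hqy : q • y ∈ Q := by
        rw [← Submodule.Quotient.mk_eq_zero Q, ← Submodule.mkQ_apply, map_smul, hy]
        exact hqd
      obtain ⟨u, hu⟩ := hqy
      -- a complex root of q
      have hdeg : 0 < (q.map (algebraMap ℝ ℂ)).degree := by
        rw [Polynomial.degree_map_eq_of_injective (algebraMap ℝ ℂ).injective]
        exact Polynomial.natDegree_pos_iff_degree_pos.mp hqirr.natDegree_pos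
      obtain ⟨z, hz⟩ := Complex.exists_root hdeg
      have hzq : aeval z q = 0 := by
        rwa [Polynomial.aeval_def, ← Polynomial.eval_map]
      by_cases huz : ∀ j, aeval z (u j) = 0
      · exfalso
        have hzint : IsIntegral ℝ z := IsIntegral.of_finite ℝ z
        have hqdvd : ∀ j, q ∣ u j := by
          intro j
          have h1 : minpoly ℝ z ∣ u j := minpoly.dvd ℝ z (huz j)
          have h2 : minpoly ℝ z ∣ q := minpoly.dvd ℝ z hzq
          exact (((minpoly.irreducible hzint).associated_of_dvd hqirr h2).symm.dvd).trans h1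
        choose u' hu' using hqdvd
        have huu : q • u' = u := by
          funext j
          rw [Pi.smul_apply, smul_eq_mul, ← hu' j]
        have hy' : φ u' = y := by
          have hcancel : q • φ u' = q • y := by
            rw [← map_smul, huu, hu]
          exact smul_right_injective (α → R) hqirr.ne_zero hcancel
        apply hd0
        rw [← hy, ← hy', Submodule.mkQ_apply, Submodule.Quotient.mk_eq_zero]
        exact LinearMap.mem_range_self φ u'
      · push_neg at huz
        obtain ⟨j0, hj0⟩ := huz
        refine ⟨z, fun j => aeval z (u j), fun h0 => hj0 (congrFun h0 j0), fun i => ?_⟩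
        show ∑ j, aeval z (P i j) * aeval z (u j) = 0
        have : ∑ j, aeval z (P i j) * aeval z (u j) = aeval z (φ u i) := by
          rw [hmv, map_sum]
          exact Finset.sum_congr rfl fun j _ => (map_mul _ _ _).symm
        rw [this, hu, Pi.smul_apply, smul_eq_mul, map_mul, hzq, zero_mul]
  · -- non injective: polynomial kernel vector
    have : ∃ v : Fin m → R, v ≠ 0 ∧ φ v = 0 := by
      rw [← LinearMap.ker_eq_bot] at hinj
      obtain ⟨v, hv, hv0⟩ := Submodule.ne_bot_iff _ |>.mp hinj
      exact ⟨v, hv0, hv⟩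
    obtain ⟨v, hv0, hvk⟩ := this
    obtain ⟨j0, hj0⟩ : ∃ j, v j ≠ 0 := by
      by_contra h0
      push_neg at h0
      exact hv0 (funext h0)
    have hmapne : (v j0).map (algebraMap ℝ ℂ) ≠ 0 :=
      (Polynomial.map_ne_zero_iff (algebraMap ℝ ℂ).injective).mpr hj0
    obtain ⟨z, hz⟩ : ∃ z : ℂ, ¬ ((v j0).map (algebraMap ℝ ℂ)).IsRoot z := by
      have hfin := Polynomial.finite_setOf_isRoot hmapne
      obtain ⟨z, hz⟩ := hfin.infinite_compl.nonempty
      exact ⟨z, hz⟩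
    have hzv : aeval z (v j0) ≠ 0 := by
      rwa [Polynomial.aeval_def, ← Polynomial.eval_map]
    refine ⟨z, fun j => aeval z (v j), fun h0 => hzv (congrFun h0 j0), fun i => ?_⟩
    show ∑ j, aeval z (P i j) * aeval z (v j) = 0
    have : ∑ j, aeval z (P i j) * aeval z (v j) = aeval z (φ v i) := by
      rw [hmv, map_sum]
      exact Finset.sum_congr rfl fun j _ => (map_mul _ _ _).symm
    rw [this, hvk]
    simp

lemma polyShift_exp (a : Polynomial ℝ) (z c : ℂ) (t : ℕ) :
    polyShift a (fun s => (z ^ s * c).re) t = ((aeval z a) * (z ^ t * c)).re := by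
  unfold polyShift
  rw [Polynomial.aeval_def, Polynomial.eval₂_eq_sum]
  rw [Polynomial.sum_def, Polynomial.sum_def, Finset.sum_mul, Complex.re_sum]
  refine Finset.sum_congr rfl fun k _ => ?_
  have h1 : algebraMap ℝ ℂ (a.coeff k) * z ^ k * (z ^ t * c)
      = (a.coeff k : ℂ) * (z ^ (t + k) * c) := by
    have : algebraMap ℝ ℂ (a.coeff k) = (a.coeff k : ℂ) := rfl
    rw [this, pow_add]
    ring
  rw [h1, Complex.re_ofReal_mul]

/-- From a complex evaluation kernel one builds a nonzero real signal in the kernel of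
`P(σ)`. -/
lemma exists_ker_signal {α : Type*} [Fintype α] {m : ℕ}
    (P : Matrix α (Fin m) (Polynomial ℝ)) (z : ℂ) (w : Fin m → ℂ) (hw : w ≠ 0)
    (h : ∀ i, ∑ j, aeval z (P i j) * w j = 0) :
    ∃ ℓ : ℕ → Fin m → ℝ, ℓ ≠ 0 ∧ matShift P ℓ = 0 := by
  obtain ⟨j0, hj0⟩ : ∃ j, w j ≠ 0 := by
    by_contra h0
    push_neg at h0
    exact hw (funext h0)
  obtain ⟨w, hwre, hw0⟩ : ∃ w' : Fin m → ℂ, (∃ j, (w' j).re ≠ 0) ∧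
      ∀ i, ∑ j, aeval z (P i j) * w' j = 0 := by
    by_cases hre : (w j0).re ≠ 0
    · exact ⟨w, ⟨j0, hre⟩, h⟩
    · push_neg at hre
      refine ⟨fun j => Complex.I * w j, ⟨j0, ?_⟩, fun i => ?_⟩
      · have him : (w j0).im ≠ 0 := fun h' => hj0 (Complex.ext hre h')
        simp [Complex.mul_re, him]
      · have : ∑ j, aeval z (P i j) * (Complex.I * w j)
            = Complex.I * ∑ j, aeval z (P i j) * w j := by
          rw [Finset.mul_sum]
          exact Finset.sum_congr rfl fun j _ => by ring
        rw [this, h i, mul_zero]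
  refine ⟨fun t j => (z ^ t * w j).re, ?_, ?_⟩
  · intro h0
    obtain ⟨j, hj⟩ := hwre
    have := congrFun (congrFun h0 0) j
    simp only [pow_zero, one_mul, Pi.zero_apply] at this
    exact hj this
  · funext t i
    show ∑ j, polyShift (P i j) (fun s => (z ^ s * w j).re) t = 0
    rw [Finset.sum_congr rfl fun j _ => polyShift_exp (P i j) z (w j) t]
    rw [← Complex.re_sum]
    have : ∑ j, aeval z (P i j) * (z ^ t * w j)
        = z ^ t * ∑ j, aeval z (P i j) * w j := by
      rw [Finset.mul_sum]
      exact Finset.sum_congr rfl fun j _ => by ring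
    rw [this, hw0 i, mul_zero, Complex.zero_re]

/-- security index in terms of the driving representation
`y = M(σ)ℓ, D(σ)ℓ = 0`: `δ(Σ) = N + 1 - L̃` where `L̃` is the smallest integer
such that every `L̃`-row selection gives a left unimodular stacked matrix. -/
theorem security_index_MD {N m : ℕ}
    (M : Matrix (Fin N) (Fin m) (Polynomial ℝ))
    (D : Matrix (Fin m) (Fin m) (Polynomial ℝ))
    (hstack : LeftUnimodular (Matrix.fromRows M D))
    (B : Set (Signal N))
    (hB : B = {y | ∃ ℓ : Signal m, y = matShift M ℓ ∧ matShift D ℓ = 0})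
    (hBne : ∃ y ∈ B, y ≠ 0)
    (Ltil : ℕ)
    (hLt : ∀ J : Finset (Fin N), J.card = Ltil →
      LeftUnimodular (Matrix.fromRows (rowSub M J) D))
    (hLtmin : ∀ k : ℕ, k < Ltil →
      ¬ ∀ J : Finset (Fin N), J.card = k →
        LeftUnimodular (Matrix.fromRows (rowSub M J) D)) :
    secIdx B = N + 1 - Ltil := by
  classical
  -- component formulas for stacked shifts
  have hstackShift : ∀ (J : Finset (Fin N)) (ℓ : Signal m) (t : ℕ),
      (∀ i : {x // x ∈ J}, matShift (Matrix.fromRows (rowSub M J) D) ℓ t (Sum.inl i)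
        = matShift M ℓ t (i : Fin N))
      ∧ (∀ k : Fin m, matShift (Matrix.fromRows (rowSub M J) D) ℓ t (Sum.inr k)
        = matShift D ℓ t k) := by
    intro J ℓ t
    constructor
    · intro i
      unfold matShift
      exact Finset.sum_congr rfl fun j _ => by rw [Matrix.fromRows_apply_inl]; rfl
    · intro k
      unfold matShift
      exact Finset.sum_congr rfl fun j _ => by rw [Matrix.fromRows_apply_inr]
  have hfullShift : ∀ (ℓ : Signal m) (t : ℕ),
      (∀ i : Fin N, matShift (Matrix.fromRows M D) ℓ t (Sum.inl i) = matShift M ℓ t i)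
      ∧ (∀ k : Fin m, matShift (Matrix.fromRows M D) ℓ t (Sum.inr k) = matShift D ℓ t k) := by
    intro ℓ t
    constructor
    · intro i
      unfold matShift
      exact Finset.sum_congr rfl fun j _ => by rw [Matrix.fromRows_apply_inl]
    · intro k
      unfold matShift
      exact Finset.sum_congr rfl fun j _ => by rw [Matrix.fromRows_apply_inr]
  -- L̃ ≥ 1
  have hL1 : 1 ≤ Ltil := by
    by_contra hL
    push_neg at hL
    have hL0 : Ltil = 0 := by omega
    obtain ⟨y, hyB, hy0⟩ := hBne
    rw [hB] at hyB
    obtain ⟨ℓ, hyM, hD⟩ := hyB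
    have hJ := hLt ∅ (by simp [hL0])
    have hker : matShift (Matrix.fromRows (rowSub M ∅) D) ℓ = 0 := by
      funext t x
      rcases x with i | k
      · exact (Finset.notMem_empty _ i.2).elim
      · rw [(hstackShift ∅ ℓ t).2 k, hD]
        rfl
    have := hJ.ker_zero hker
    rw [this, matShift_zero_sig] at hyM
    exact hy0 hyM
  -- lower bound on the weight of nonzero behavior elements
  have lower : ∀ y ∈ B, y ≠ 0 → N + 1 - Ltil ≤ wt y := by
    intro y hyB hy0
    by_contra hlt
    push_neg at hlt
    rw [hB] at hyB
    obtain ⟨ℓ, hyM, hD⟩ := hyB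
    set Z : Finset (Fin N) := Finset.univ.filter (fun i => ∀ t, y t i = 0) with hZ
    set S : Finset (Fin N) := Finset.univ.filter (fun i => ¬ ∀ t, y t i = 0) with hS
    have hcard : Z.card + S.card = N := by
      have h := Finset.card_filter_add_card_filter_not
        (s := (Finset.univ : Finset (Fin N))) (p := fun i => ∀ t, y t i = 0)
      rw [Finset.card_univ, Fintype.card_fin] at h
      exact h
    have hwtS : wt y = S.card := by
      have : sigSupp y = ↑S := by
        ext i
        simp [sigSupp, hS]
      rw [wt, this, Set.ncard_coe_finset]
    have hZcard : Ltil ≤ Z.card := by omega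
    obtain ⟨J, hJZ, hJcard⟩ := Finset.exists_subset_card_eq hZcard
    have hJ := hLt J hJcard
    have hker : matShift (Matrix.fromRows (rowSub M J) D) ℓ = 0 := by
      funext t x
      rcases x with i | k
      · rw [(hstackShift J ℓ t).1 i]
        have hiZ : (i : Fin N) ∈ Z := hJZ i.2
        rw [hZ] at hiZ
        have h0 := (Finset.mem_filter.mp hiZ).2 t
        rw [hyM] at h0
        exact h0
      · rw [(hstackShift J ℓ t).2 k, hD]
        rfl
    have := hJ.ker_zero hker
    rw [this, matShift_zero_sig] at hyM
    exact hy0 hyM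
  -- construction of a minimal-weight element
  have hmin := hLtmin (Ltil - 1) (by omega)
  push_neg at hmin
  obtain ⟨J, hJcard, hJnu⟩ := hmin
  obtain ⟨z, w, hw, hkerw⟩ := exists_complex_ker _ hJnu
  obtain ⟨ℓ, hl0, hlker⟩ := exists_ker_signal _ z w hw hkerw
  set y : Signal N := matShift M ℓ with hy
  have hDl : matShift D ℓ = 0 := by
    funext t k
    have := congrFun (congrFun hlker t) (Sum.inr k)
    rw [(hstackShift J ℓ t).2 k] at this
    exact this
  have hyB : y ∈ B := by
    rw [hB]
    exact ⟨ℓ, rfl, hDl⟩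
  have hy0 : y ≠ 0 := by
    intro h0
    apply hl0
    apply hstack.ker_zero
    funext t x
    rcases x with i | k
    · rw [(hfullShift ℓ t).1 i, ← hy]
      rw [h0]
      rfl
    · rw [(hfullShift ℓ t).2 k, hDl]
      rfl
  have hupper : wt y ≤ N + 1 - Ltil := by
    have hsupp : sigSupp y ⊆ ↑(Jᶜ) := by
      intro i hi
      simp only [Finset.coe_compl, Set.mem_compl_iff, Finset.mem_coe]
      intro hiJ
      apply hi
      intro t
      have := congrFun (congrFun hlker t) (Sum.inl ⟨i, hiJ⟩)
      rw [(hstackShift J ℓ t).1 ⟨i, hiJ⟩] at this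
      exact this
    have h1 : wt y ≤ (Jᶜ : Finset (Fin N)).card := by
      have := Set.ncard_le_ncard hsupp (Set.Finite.ofFinset (Jᶜ) (by simp))
      rwa [Set.ncard_coe_finset] at this
    rw [Finset.card_compl, hJcard] at h1
    simp only [Fintype.card_fin] at h1
    omega
  have hwty : wt y = N + 1 - Ltil := le_antisymm hupper (lower y hyB hy0)
  have hmem : (N + 1 - Ltil) ∈ {k | ∃ y ∈ B, y ≠ 0 ∧ wt y = k} := ⟨y, hyB, hy0, hwty⟩
  refine le_antisymm (Nat.sInf_le hmem) ?_
  refine le_csInf ⟨_, hmem⟩ ?_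
  rintro k ⟨y', hy'B, hy'0, rfl⟩
  exact lower y' hy'B hy'0
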